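/- Suppose r ≥ 8 is even and m = r/2 − 1 (so n = 4), and let q be the canonical coefficient family with parameter λ ≠ 0. Let p ∈ ℂ^{r+1} have coordinates p_0 = p_{m−1} = 1 and p_i = 0 otherwise. Then Q_k(p) = Σ_{0≤i,j≤r} q_k(i,j)·p_i·p_j = 0 for k = 0, 1, 2, 3, 4 (so p lies on the affine cone of M_m), and the 5×(r+1) Jacobian matrix J with entries J_{k,i} = 2·q_k(i, 2m+k−i)·p_{2m+k−i} (entries with 2m+k−i outside {0,…,r} being 0) has rank 5. (This shows M_m ⊆ ℙ^r has codimension 5, hence degree 32.) -/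

import Mathlib

open Finset

noncomputable section

/-- `famN r m = 2r - 4m`, the highest weight `n` of the target representation. -/
def famN (r m : ℕ) : ℤ := 2 * (r : ℤ) - 4 * (m : ℤ)

/-- A *coefficient family* for parameters `r, m`: a function `q k i j` (complex valued,
indices integers) that vanishes whenever `(k,i,j)` is out of range
(`0 ≤ k ≤ n`, `0 ≤ i,j ≤ r`, where `n = 2r - 4m`) and satisfies the sl₂-compatibility
relations (R1), (R2), (R3) for all admissible indices. -/
def IsCoeffFamily (r m : ℕ) (q : ℤ → ℤ → ℤ → ℂ) : Prop :=
  (∀ k i j : ℤ,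
      ¬(0 ≤ k ∧ k ≤ famN r m ∧ 0 ≤ i ∧ i ≤ (r : ℤ) ∧ 0 ≤ j ∧ j ≤ (r : ℤ)) →
      q k i j = 0) ∧
  (∀ k i j : ℤ, 0 ≤ k → k ≤ famN r m → 0 ≤ i → i ≤ (r : ℤ) → 0 ≤ j → j ≤ (r : ℤ) →
      (k : ℂ) * q (k - 1) i j
        = ((i : ℂ) + 1) * q k (i + 1) j + ((j : ℂ) + 1) * q k i (j + 1)) ∧
  (∀ k i j : ℤ, 0 ≤ k → k ≤ famN r m → 0 ≤ i → i ≤ (r : ℤ) → 0 ≤ j → j ≤ (r : ℤ) →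
      ((famN r m - k : ℤ) : ℂ) * q (k + 1) i j
        = (((r : ℤ) - i + 1 : ℤ) : ℂ) * q k (i - 1) j
          + (((r : ℤ) - j + 1 : ℤ) : ℂ) * q k i (j - 1)) ∧
  (∀ k i j : ℤ, 0 ≤ k → k ≤ famN r m → 0 ≤ i → i ≤ (r : ℤ) → 0 ≤ j → j ≤ (r : ℤ) →
      ((famN r m - 2 * k - 2 * (r : ℤ) + 2 * i + 2 * j : ℤ) : ℂ) * q k i j = 0)

/-- Binomial coefficient `binom a b` for integers, interpreted as `0` when `b` is out of
the range `0 ≤ b ≤ a`, as a complex number. -/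
def binomZ (a b : ℤ) : ℂ :=
  if 0 ≤ b ∧ b ≤ a then (Nat.choose a.toNat b.toNat : ℂ) else 0

/-- The *canonical coefficient family* with parameter `λ`: the coefficient family whose
level-0 component is `q₀ i j = (-1)^i * binom (2m) i * λ` if `i + j = 2m` and `0`
otherwise. -/
def IsCanonical (r m : ℕ) (lam : ℂ) (q : ℤ → ℤ → ℤ → ℂ) : Prop :=
  IsCoeffFamily r m q ∧
  ∀ i j : ℤ, 0 ≤ i → i ≤ (r : ℤ) → 0 ≤ j → j ≤ (r : ℤ) →
    q 0 i j =
      if i + j = 2 * (m : ℤ) then (-1) ^ i.toNat * binomZ (2 * (m : ℤ)) i * lam else 0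
/-- The point `p` with `p_0 = p_{m-1} = 1` and all other coordinates `0`. -/
def pPoint (m : ℕ) : ℤ → ℂ := fun i => if i = 0 ∨ i = (m : ℤ) - 1 then 1 else 0

/-!
Along the weight line `i + j = 2m + k` (off it `q_k` vanishes by (R3)), relation (R2) determines
`q_{k+1}` from `q_k`, and (R1) at level `0` is a two-term recursion for `q_0`. For `n = 4` this
gives `binom(4,2) q_k(i,j) = ∑_t binom(k,t) binom(4-k,2-t) q_0(i-t, j-k+t)`; for instance
`q_4(i,j) = q_0(i-2,j-2)`.

The support `{0, m-1}` of `p` lies below the weight lines, so every term of `Q_k(p)` vanishes.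
In row `k` of the Jacobian the first nonzero entry sits in column `m+1+k`; by the closed form it
is `±λ` times a positive multiple of `β₁`, `β₁ - β₂`, `β₁ - 4β₂ + β₃`, `β₂ - β₃` or `β₃`, where
`β_s = binom(2m, m+s)`. These are nonzero since `(m+s+1) β_{s+1} = (m-s) β_s`, so the Jacobian
is in row echelon form with five pivots.
-/

theorem Matrix.rank_eq_card_of_isLeadingEntry {m n R : Type*} [Fintype m] [Fintype n]
    [LinearOrder m] [LinearOrder n] [CommRing R] [IsDomain R] {A : Matrix m n R} {c : m → n}
    (hc : StrictMono c) (hA : ∀ i, A.IsLeadingEntry i (c i)) : A.rank = Fintype.card m := by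
  have hpiv : A.IsPivotedBy fun i => (c i : WithTop n) :=
    Matrix.isPivotedBy_iff'.mpr ⟨(WithTop.coe_strictMono.comp hc).monotone,
      (WithTop.coe_strictMono.comp hc).strictMonoOn _, fun i => Or.inr ⟨c i, rfl, hA i⟩⟩
  simp [hpiv.rank_eq]

theorem Nat.choose_two_mul_add_succ_lt {m s : ℕ} (hs : s < m) :
    (2 * m).choose (m + s + 1) < (2 * m).choose (m + s) := by
  have h := Nat.choose_succ_right_eq (2 * m) (m + s)
  rw [show 2 * m - (m + s) = m - s by omega] at h
  refine Nat.lt_of_mul_lt_mul_right (a := m + s + 1) ?_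
  rw [h]
  exact Nat.mul_lt_mul_of_pos_left (by omega) (Nat.choose_pos (by omega))

theorem Nat.choose_two_mul_add_one_add_choose_add_three_lt {m : ℕ} (hm : 3 ≤ m) :
    (2 * m).choose (m + 1) + (2 * m).choose (m + 3) < 4 * (2 * m).choose (m + 2) := by
  have h12 := Nat.choose_succ_right_eq (2 * m) (m + 1)
  have h23 := Nat.choose_succ_right_eq (2 * m) (m + 2)
  have hx := Nat.choose_pos (show m + 1 ≤ 2 * m by omega)
  set x := (2 * m).choose (m + 1)
  set y := (2 * m).choose (m + 2)
  set z := (2 * m).choose (m + 3)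
  zify [show m + 1 ≤ 2 * m by omega, show m + 2 ≤ 2 * m by omega] at h12 h23 hx ⊢
  have key : ((m : ℤ) + 2) * (m + 3) * (4 * y - (x + z)) = 2 * (m + 5) * (m - 2) * x := by
    linear_combination (3 * (m : ℤ) + 14) * h12 - ((m : ℤ) + 2) * h23
  have hpos : 0 < 2 * ((m : ℤ) + 5) * (m - 2) * x := by
    have : (0 : ℤ) < m - 2 := by omega
    positivity
  nlinarith

theorem pPoint_eq_zero {m : ℕ} {i : ℤ} (h0 : i ≠ 0) (h1 : i ≠ m - 1) : pPoint m i = 0 := by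
  simp [pPoint, h0, h1]

namespace IsCoeffFamily

variable {r m : ℕ} {q : ℤ → ℤ → ℤ → ℂ}

-- Outside the index box both sides vanish: the boundary term with `i = -1` or `j = -1` is killed by
-- its coefficient. The same happens in `lower` at `i = r + 1` or `j = r + 1`.
theorem raise (hq : IsCoeffFamily r m q) {k : ℤ} (hk : 0 ≤ k) (hkn : k ≤ famN r m) (i j : ℤ) :
    (k : ℂ) * q (k - 1) i j = ((i : ℂ) + 1) * q k (i + 1) j + ((j : ℂ) + 1) * q k i (j + 1) := by
  by_cases h : 0 ≤ i ∧ i ≤ r ∧ 0 ≤ j ∧ j ≤ r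
  · exact hq.2.1 k i j hk hkn h.1 h.2.1 h.2.2.1 h.2.2.2
  have hi : ((i : ℂ) + 1) * q k (i + 1) j = 0 := by
    rcases eq_or_ne i (-1) with rfl | hi
    · simp
    · rw [hq.1 _ _ _ (by omega), mul_zero]
  have hj : ((j : ℂ) + 1) * q k i (j + 1) = 0 := by
    rcases eq_or_ne j (-1) with rfl | hj
    · simp
    · rw [hq.1 _ _ _ (by omega), mul_zero]
  rw [hq.1 _ _ _ (by omega), hi, hj, mul_zero, add_zero]

theorem lower (hq : IsCoeffFamily r m q) {k : ℤ} (hk : 0 ≤ k) (hkn : k ≤ famN r m) (i j : ℤ) :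
    ((famN r m - k : ℤ) : ℂ) * q (k + 1) i j
      = (((r : ℤ) - i + 1 : ℤ) : ℂ) * q k (i - 1) j
        + (((r : ℤ) - j + 1 : ℤ) : ℂ) * q k i (j - 1) := by
  by_cases h : 0 ≤ i ∧ i ≤ r ∧ 0 ≤ j ∧ j ≤ r
  · exact hq.2.2.1 k i j hk hkn h.1 h.2.1 h.2.2.1 h.2.2.2
  have hi : (((r : ℤ) - i + 1 : ℤ) : ℂ) * q k (i - 1) j = 0 := by
    rcases eq_or_ne i (r + 1) with rfl | hi
    · simp
    · rw [hq.1 _ _ _ (by omega), mul_zero]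
  have hj : (((r : ℤ) - j + 1 : ℤ) : ℂ) * q k i (j - 1) = 0 := by
    rcases eq_or_ne j (r + 1) with rfl | hj
    · simp
    · rw [hq.1 _ _ _ (by omega), mul_zero]
  rw [hq.1 _ _ _ (by omega), hi, hj, mul_zero, add_zero]

theorem weight (hq : IsCoeffFamily r m q) (k i j : ℤ) :
    ((famN r m - 2 * k - 2 * (r : ℤ) + 2 * i + 2 * j : ℤ) : ℂ) * q k i j = 0 := by
  by_cases h : 0 ≤ k ∧ k ≤ famN r m ∧ 0 ≤ i ∧ i ≤ r ∧ 0 ≤ j ∧ j ≤ r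
  · exact hq.2.2.2 k i j h.1 h.2.1 h.2.2.1 h.2.2.2.1 h.2.2.2.2.1 h.2.2.2.2.2
  · rw [hq.1 k i j h, mul_zero]

theorem eq_zero_of_weight_ne (hq : IsCoeffFamily r m q) {k i j : ℤ}
    (h : famN r m - 2 * k - 2 * (r : ℤ) + 2 * i + 2 * j ≠ 0) : q k i j = 0 :=
  (mul_eq_zero.mp (hq.weight k i j)).resolve_left (by exact_mod_cast h)

theorem famN_eq_four (hrm : r = 2 * m + 2) : famN r m = 4 := by
  rw [famN, hrm]; push_cast; ring

section FamNFour

variable (hq : IsCoeffFamily r m q) (hrm : r = 2 * m + 2)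
include hq hrm

theorem q_zero_weight (i j : ℤ) : ((i : ℂ) + j - 2 * m) * q 0 i j = 0 := by
  have h := hq.weight 0 i j
  rw [famN_eq_four hrm, hrm] at h
  push_cast at h
  linear_combination h / 2

theorem q_zero_raise (i j : ℤ) :
    ((i : ℂ) + 1) * q 0 (i + 1) j + ((j : ℂ) + 1) * q 0 i (j + 1) = 0 := by
  have h := hq.raise le_rfl (by rw [famN_eq_four hrm]; norm_num) i j
  push_cast at h
  linear_combination -h

theorem lower_four {k : ℤ} (hk : 0 ≤ k) (hk4 : k ≤ 4) (i j : ℤ) :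
    (4 - k : ℂ) * q (k + 1) i j
      = (2 * m + 3 - i : ℂ) * q k (i - 1) j + (2 * m + 3 - j : ℂ) * q k i (j - 1) := by
  have h := hq.lower hk (by rw [famN_eq_four hrm]; exact hk4) i j
  rw [famN_eq_four hrm, hrm] at h
  push_cast at h
  linear_combination h

-- All `q 0` terms lie on the line `i + j = 2m`, where `q_zero_weight` trades `2m` for `i + j`;
-- what is left is a sum of instances of `q_zero_raise`.
theorem two_mul_q_one (i j : ℤ) : 2 * q 1 i j = q 0 (i - 1) j + q 0 i (j - 1) := by
  have h := hq.lower_four hrm le_rfl (by norm_num) i j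
  linear_combination (norm := (push_cast; ring_nf)) h / 2
    - hq.q_zero_weight hrm (i - 1) j / 2 - hq.q_zero_weight hrm i (j - 1) / 2
    + hq.q_zero_raise hrm (i - 1) (j - 1) / 2

theorem six_mul_q_two (i j : ℤ) :
    6 * q 2 i j = q 0 (i - 2) j + 4 * q 0 (i - 1) (j - 1) + q 0 i (j - 2) := by
  have h := hq.lower_four hrm zero_le_one (by norm_num) i j
  linear_combination (norm := (push_cast; ring_nf)) 2 * h
    + (2 * m + 3 - i : ℂ) * hq.two_mul_q_one hrm (i - 1) j
    + (2 * m + 3 - j : ℂ) * hq.two_mul_q_one hrm i (j - 1)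
    - hq.q_zero_weight hrm (i - 2) j - 2 * hq.q_zero_weight hrm (i - 1) (j - 1)
    - hq.q_zero_weight hrm i (j - 2)
    + hq.q_zero_raise hrm (i - 2) (j - 1) + hq.q_zero_raise hrm (i - 1) (j - 2)

theorem two_mul_q_three (i j : ℤ) :
    2 * q 3 i j = q 0 (i - 2) (j - 1) + q 0 (i - 1) (j - 2) := by
  have h := hq.lower_four hrm zero_le_two (by norm_num) i j
  linear_combination (norm := (push_cast; ring_nf)) h
    + (2 * m + 3 - i : ℂ) / 6 * hq.six_mul_q_two hrm (i - 1) j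
    + (2 * m + 3 - j : ℂ) / 6 * hq.six_mul_q_two hrm i (j - 1)
    + (- hq.q_zero_weight hrm (i - 3) j - 5 * hq.q_zero_weight hrm (i - 2) (j - 1)
      - 5 * hq.q_zero_weight hrm (i - 1) (j - 2) - hq.q_zero_weight hrm i (j - 3)
      + hq.q_zero_raise hrm (i - 3) (j - 1) + 4 * hq.q_zero_raise hrm (i - 2) (j - 2)
      + hq.q_zero_raise hrm (i - 1) (j - 3)) / 6

theorem q_four (i j : ℤ) : q 4 i j = q 0 (i - 2) (j - 2) := by
  have h := hq.lower_four hrm (by norm_num : (0 : ℤ) ≤ 3) (by norm_num) i j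
  linear_combination (norm := (push_cast; ring_nf)) h
    + (2 * m + 3 - i : ℂ) / 2 * hq.two_mul_q_three hrm (i - 1) j
    + (2 * m + 3 - j : ℂ) / 2 * hq.two_mul_q_three hrm i (j - 1)
    + (- hq.q_zero_weight hrm (i - 3) (j - 1) - 2 * hq.q_zero_weight hrm (i - 2) (j - 2)
      - hq.q_zero_weight hrm (i - 1) (j - 3)
      + hq.q_zero_raise hrm (i - 3) (j - 2) + hq.q_zero_raise hrm (i - 2) (j - 3)) / 2

theorem eq_zero_of_add_ne {k i j : ℤ} (h : i + j ≠ 2 * m + k) : q k i j = 0 :=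
  hq.eq_zero_of_weight_ne (by rw [famN_eq_four hrm, hrm]; push_cast; omega)

theorem q_mul_pPoint_mul_pPoint (hm : m ≠ 0) {k : ℤ} (hk : 0 ≤ k) (i j : ℤ) :
    q k i j * pPoint m i * pPoint m j = 0 := by
  by_cases hi : i = 0 ∨ i = m - 1
  · by_cases hj : j = 0 ∨ j = m - 1
    · rw [hq.eq_zero_of_add_ne hrm (by omega), zero_mul, zero_mul]
    · rw [pPoint_eq_zero (i := j) (by tauto) (by tauto), mul_zero]
  · rw [pPoint_eq_zero (i := i) (by tauto) (by tauto), mul_zero, zero_mul]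

end FamNFour

end IsCoeffFamily

namespace IsCanonical

variable {r m : ℕ} {lam : ℂ} {q : ℤ → ℤ → ℤ → ℂ}

theorem q_zero_add_sub (hq : IsCanonical r m lam q) (h2m : 2 * m ≤ r) {s : ℕ} (hs : s ≤ m) :
    q 0 (m + s) (m - s) = (-1) ^ (m + s) * ((2 * m).choose (m + s) : ℂ) * lam := by
  rw [hq.2 _ _ (by omega) (by omega) (by omega) (by omega), if_pos (by ring), binomZ,
    if_pos ⟨by omega, by omega⟩]
  congr

theorem q_diag_ne_zero (hq : IsCanonical r m lam q) (hrm : r = 2 * m + 2) (hm : 3 ≤ m)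
    (hlam : lam ≠ 0) {k : ℕ} (hk : k ≤ 4) : q k (m + 1 + k) (m - 1) ≠ 0 := by
  have hb1 := hq.q_zero_add_sub (s := 1) (by omega) (by omega)
  have hb2 := hq.q_zero_add_sub (s := 2) (by omega) (by omega)
  have hb3 := hq.q_zero_add_sub (s := 3) (by omega) (by omega)
  push_cast at hb1 hb2 hb3
  have hsl : (-1) ^ m * lam ≠ 0 := mul_ne_zero (pow_ne_zero _ (by norm_num)) hlam
  intro h
  interval_cases k
  · have e : (-1) ^ m * lam * (2 * m).choose (m + 1) = 0 := by
      linear_combination (norm := (push_cast; ring_nf)) hb1 - h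
    exact mul_ne_zero hsl (Nat.cast_ne_zero.mpr (Nat.choose_pos (by omega)).ne') e
  · have e : (-1) ^ m * lam * ((2 * m).choose (m + 1) - (2 * m).choose (m + 2) : ℂ) = 0 := by
      linear_combination (norm := (push_cast; ring_nf))
        hq.1.two_mul_q_one hrm (m + 1 + 1) (m - 1) - 2 * h + hb1 + hb2
    refine mul_ne_zero hsl (sub_ne_zero.mpr ?_) e
    exact_mod_cast (Nat.choose_two_mul_add_succ_lt (s := 1) (by omega)).ne'
  · have e : (-1) ^ m * lam * ((2 * m).choose (m + 1) + (2 * m).choose (m + 3)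
        - 4 * (2 * m).choose (m + 2) : ℂ) = 0 := by
      linear_combination (norm := (push_cast; ring_nf))
        hq.1.six_mul_q_two hrm (m + 1 + 2) (m - 1) - 6 * h + hb1 + 4 * hb2 + hb3
    refine mul_ne_zero hsl (sub_ne_zero.mpr ?_) e
    exact_mod_cast (Nat.choose_two_mul_add_one_add_choose_add_three_lt hm).ne
  · have e : (-1) ^ m * lam * ((2 * m).choose (m + 2) - (2 * m).choose (m + 3) : ℂ) = 0 := by
      linear_combination (norm := (push_cast; ring_nf))
        -hq.1.two_mul_q_three hrm (m + 1 + 3) (m - 1) + 2 * h - hb2 - hb3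
    refine mul_ne_zero hsl (sub_ne_zero.mpr ?_) e
    exact_mod_cast (Nat.choose_two_mul_add_succ_lt (s := 2) (by omega)).ne'
  · have e : (-1) ^ m * lam * (2 * m).choose (m + 3) = 0 := by
      linear_combination (norm := (push_cast; ring_nf))
        hq.1.q_four hrm (m + 1 + 4) (m - 1) - h + hb3
    exact mul_ne_zero hsl (Nat.cast_ne_zero.mpr (Nat.choose_pos (by omega)).ne') e

end IsCanonical

/-- for `r ≥ 8` even, `m = r/2 - 1` (so `n = 4`), the point `p` with
`p_0 = p_{m-1} = 1` lies on the affine cone of `M_m` and the Jacobian of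
`(Q_0, …, Q_4)` at `p` has rank `5` (hence `M_m` has codimension `5` and degree `32`). -/
theorem stmt15 (r m : ℕ) (hr : 8 ≤ r) (hrm : r = 2 * m + 2)
    (lam : ℂ) (hlam : lam ≠ 0)
    (q : ℤ → ℤ → ℤ → ℂ) (hq : IsCanonical r m lam q) :
    (∀ k : ℤ, 0 ≤ k → k ≤ 4 →
      ∑ i ∈ Finset.Icc (0 : ℤ) (r : ℤ), ∑ j ∈ Finset.Icc (0 : ℤ) (r : ℤ),
        q k i j * pPoint m i * pPoint m j = 0) ∧
    (Matrix.of fun (k : Fin 5) (i : Fin (r + 1)) =>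
        2 * q ((k : ℕ) : ℤ) ((i : ℕ) : ℤ)
            (2 * (m : ℤ) + ((k : ℕ) : ℤ) - ((i : ℕ) : ℤ))
          * pPoint m (2 * (m : ℤ) + ((k : ℕ) : ℤ) - ((i : ℕ) : ℤ))).rank = 5 := by
  have hm : 3 ≤ m := by omega
  refine ⟨fun k hk _ => sum_eq_zero fun i _ => sum_eq_zero fun j _ =>
    hq.1.q_mul_pPoint_mul_pPoint hrm (by omega) hk i j, ?_⟩
  let c : Fin 5 → Fin (r + 1) := fun k => ⟨m + 1 + k, by omega⟩
  have hc : StrictMono c := fun a b hab => by simp only [c, Fin.mk_lt_mk]; omega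
  rw [Matrix.rank_eq_card_of_isLeadingEntry hc fun k => ⟨fun j hj => ?_, ?_⟩, Fintype.card_fin]
  · replace hj : (j : ℕ) < m + 1 + k := hj
    rw [Matrix.of_apply, pPoint_eq_zero (by omega) (by omega), mul_zero]
  · have hk := hq.q_diag_ne_zero hrm hm hlam (k := k) (by omega)
    simp only [Matrix.of_apply, c]
    push_cast
    rw [show 2 * (m : ℤ) + k - (m + 1 + k) = m - 1 by ring, pPoint, if_pos (Or.inr rfl)]
    simpa using hk
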